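/- arXiv:1409.6024 — 7 statements merged into one kernel-verified Lean document; each statement's English description precedes it below -/
import Mathlib

section
/- For any two permutations π, ν of {1,…,n} with n ≥ 2, the block transposition distance satisfies d(π,ν) ≤ n−1; that is, ν can always be obtained from π by composing with at most n−1 block transpositions. -/
/-! Insertion sort. If `τ` fixes every point above `p`, then `τ p ≤ p`, and the block
transposition `Fin.cycleIcc (τ p) p`, which moves the entry at `p` down to `τ p`, agrees with `τ`
at `p`. Peeling these off for `p = n-1, …, 1` writes `π⁻¹ * ν` as a product of at most `n - 1`
block transpositions; nothing is left for `p = 0`. -/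

/-- `π` is the block transposition `σ(i,j,k)` on `{1,…,n}` (positions/values written
1-based; the underlying type is `Fin n`, so position `t : Fin n` stands for `t+1`). -/
def IsBlockTranspositionOf (n i j k : ℕ) (π : Equiv.Perm (Fin n)) : Prop :=
  i < j ∧ j < k ∧ k ≤ n ∧
  ∀ t : Fin n,
    (π t : ℕ) + 1 =
      if t.val + 1 ≤ i ∨ k < t.val + 1 then t.val + 1
      else if t.val + 1 ≤ k - j + i then t.val + 1 + (j - i)
      else t.val + 1 - (k - j)

/-- `π` is a block transposition of `Sym_n`. -/
def IsBlockTransposition (n : ℕ) (π : Equiv.Perm (Fin n)) : Prop :=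
  ∃ i j k : ℕ, IsBlockTranspositionOf n i j k π

/-- the block transposition distance `d(π,ν)`: the least `m` such that
`ν = π ∘ σ₁ ∘ ⋯ ∘ σ_m` with each `σ_i` a block transposition. -/
noncomputable def btDist (n : ℕ) (π ν : Equiv.Perm (Fin n)) : ℕ :=
  sInf {m | ∃ l : List (Equiv.Perm (Fin n)),
    l.length = m ∧ (∀ σ ∈ l, IsBlockTransposition n σ) ∧ ν = π * l.prod}

/-- `[0 π]` : the permutation of `{0,…,n}` fixing `0` and agreeing with `π` on `{1,…,n}`. -/
def zeroExtend {n : ℕ} (π : Equiv.Perm (Fin n)) : Equiv.Perm (Fin (n + 1)) :=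
  Equiv.Perm.decomposeFin.symm (0, π)

/-- the value of the sequence `0 π₁ ⋯ π_n` (positions taken mod `n+1`, `π₀ := 0`). -/
def seqVal (n : ℕ) (π : Equiv.Perm (Fin n)) (x : ℕ) : ℕ :=
  if h : x % (n + 1) = 0 then 0
  else (π ⟨x % (n + 1) - 1, by
    have h2 : x % (n + 1) < n + 1 := Nat.mod_lt _ (Nat.succ_pos n)
    omega⟩ : Fin n).val + 1

/-- `π` and `π'` are torically equivalent: `π'_x ≡ π_{x+r} − π_r (mod n+1)`. -/
def ToricEquiv (n : ℕ) (π π' : Equiv.Perm (Fin n)) : Prop :=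
  ∃ r ≤ n, ∀ x : ℕ, 1 ≤ x → x ≤ n →
    seqVal n π' x ≡ seqVal n π (x + r) + (n + 1) - seqVal n π r [MOD n + 1]

/-- `ϖ` is the image of `π` under the toric map `Ω_r`. -/
def IsToricImage (n r : ℕ) (π ϖ : Equiv.Perm (Fin n)) : Prop :=
  ∀ x : ℕ, 1 ≤ x → x ≤ n →
    seqVal n ϖ x ≡ seqVal n π (x + r) + (n + 1) - seqVal n π r [MOD n + 1]

/-- the value at place `x` of the sequence `0 π₁ ⋯ π_n (n+1)`. -/
def extSeq (n : ℕ) (π : Equiv.Perm (Fin n)) (x : ℕ) : ℕ :=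
  if hx : 1 ≤ x ∧ x ≤ n then (π ⟨x - 1, by omega⟩ : Fin n).val + 1
  else if x = 0 then 0 else n + 1

/-- the number of bonds of `π`, i.e. of adjacent pairs `x, x+1` in the sequence
`0 π₁ ⋯ π_n (n+1)`. -/
def bondCount (n : ℕ) (π : Equiv.Perm (Fin n)) : ℕ :=
  ((Finset.range (n + 1)).filter fun t => extSeq n π (t + 1) = extSeq n π t + 1).card

/-- `σ` is a block transposition `σ̄(i,j,k)`, `−1 ≤ i < j < k ≤ n`, of `{0,1,…,n}`. -/
def IsBlockTransposition0 (n : ℕ) (σ : Equiv.Perm (Fin (n + 1))) : Prop :=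
  ∃ i j k : ℤ, -1 ≤ i ∧ i < j ∧ j < k ∧ k ≤ (n : ℤ) ∧
    ∀ t : Fin (n + 1),
      ((σ t : ℕ) : ℤ) =
        if ((t : ℕ) : ℤ) ≤ i ∨ k < ((t : ℕ) : ℤ) then ((t : ℕ) : ℤ)
        else if ((t : ℕ) : ℤ) ≤ k - j + i then ((t : ℕ) : ℤ) + (j - i)
        else ((t : ℕ) : ℤ) - (k - j)

/-- the number of bonds of a permutation `π̄` of `{0,…,n}`: indices `t`, `0 ≤ t < n`,
with `π̄_{t+1} ≡ π̄_t + 1 (mod n+1)`. -/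
def bondCount0 (n : ℕ) (π : Equiv.Perm (Fin (n + 1))) : ℕ :=
  (Finset.univ.filter fun t : Fin n =>
    (π t.succ : Fin (n + 1)).val = ((π t.castSucc : Fin (n + 1)).val + 1) % (n + 1)).card

open Equiv

lemma isBlockTransposition_cycleIcc {n : ℕ} {a b : Fin n} (hab : a < b) :
    IsBlockTransposition n (Fin.cycleIcc a b) := by
  have : NeZero n := ⟨b.pos.ne'⟩
  have hab' := Fin.lt_def.mp hab
  refine ⟨a, a + 1, b + 1, by omega, by omega, by omega, fun t => ?_⟩
  rcases lt_or_ge t a with hta | hat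
  · rw [Fin.cycleIcc_of_lt hta]
    have := Fin.lt_def.mp hta
    split_ifs <;> omega
  rcases lt_or_ge b t with hbt | htb
  · rw [Fin.cycleIcc_of_gt hbt]
    have := Fin.lt_def.mp hbt
    split_ifs <;> omega
  have := Fin.le_def.mp hat
  rcases htb.eq_or_lt with rfl | htb
  · rw [Fin.cycleIcc_of_last hat]
    split_ifs <;> omega
  · rw [Fin.cycleIcc_of_ge_of_lt hat htb, Fin.val_add_one_of_lt' (by omega)]
    have := Fin.lt_def.mp htb
    split_ifs <;> omega

def IsProdBlockTranspositions (n k : ℕ) (τ : Perm (Fin n)) : Prop :=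
  ∃ l : List (Perm (Fin n)), l.length ≤ k ∧ (∀ σ ∈ l, IsBlockTransposition n σ) ∧ l.prod = τ

namespace IsProdBlockTranspositions

variable {n k : ℕ} {τ : Perm (Fin n)}

lemma one : IsProdBlockTranspositions n k 1 :=
  ⟨[], Nat.zero_le k, by simp, rfl⟩

lemma mono {k' : ℕ} (h : IsProdBlockTranspositions n k τ) (hk : k ≤ k') :
    IsProdBlockTranspositions n k' τ :=
  let ⟨l, hlen, hl, hprod⟩ := h
  ⟨l, hlen.trans hk, hl, hprod⟩

lemma mul_left {σ : Perm (Fin n)} (hσ : IsBlockTransposition n σ)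
    (h : IsProdBlockTranspositions n k τ) : IsProdBlockTranspositions n (k + 1) (σ * τ) :=
  let ⟨l, hlen, hl, hprod⟩ := h
  ⟨σ :: l, by simpa using hlen, by simpa [hσ] using hl, by rw [List.prod_cons, hprod]⟩

end IsProdBlockTranspositions

lemma btDist_le_of_isProdBlockTranspositions {n k : ℕ} {π ν : Perm (Fin n)}
    (h : IsProdBlockTranspositions n k (π⁻¹ * ν)) : btDist n π ν ≤ k := by
  obtain ⟨l, hlen, hl, hprod⟩ := h
  unfold btDist
  refine (Nat.sInf_le (Set.mem_ofPred.mpr ⟨l, rfl, hl, ?_⟩)).trans hlen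
  rw [hprod, mul_inv_cancel_left]

section LargestMovedPoint

variable {n : ℕ} {τ : Perm (Fin n)} {p : Fin n}

lemma apply_le_of_forall_gt_fixed (h : ∀ x, p < x → τ x = x) : τ p ≤ p := by
  by_contra! hlt
  exact hlt.ne' (τ.injective (h _ hlt))

lemma cycleIcc_inv_mul_apply_of_le (h : ∀ x, p < x → τ x = x) {x : Fin n} (hx : p ≤ x) :
    ((Fin.cycleIcc (τ p) p)⁻¹ * τ) x = x := by
  have : NeZero n := ⟨p.pos.ne'⟩
  rw [Perm.mul_apply, Perm.inv_eq_iff_eq]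
  rcases hx.eq_or_lt with rfl | hpx
  · exact (Fin.cycleIcc_of_last (apply_le_of_forall_gt_fixed h)).symm
  · rw [h x hpx, Fin.cycleIcc_of_gt hpx]

end LargestMovedPoint

lemma isProdBlockTranspositions_of_forall_le_fixed {n : ℕ} (m : ℕ) (τ : Perm (Fin n))
    (hτ : ∀ x : Fin n, m ≤ x.val → τ x = x) : IsProdBlockTranspositions n (m - 1) τ := by
  induction m generalizing τ with
  | zero =>
    obtain rfl : τ = 1 := Perm.ext fun x => hτ x (Nat.zero_le _)
    exact .one
  | succ m ih =>
    by_cases hm : m < n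
    · obtain ⟨p, rfl⟩ : ∃ p : Fin n, p.val = m := ⟨⟨m, hm⟩, rfl⟩
      have hτp : ∀ x, p < x → τ x = x := fun x hx => hτ x hx
      have hτ' := ih _ fun x hx => cycleIcc_inv_mul_apply_of_le hτp hx
      rcases (apply_le_of_forall_gt_fixed hτp).lt_or_eq with hlt | heq
      · have := hτ'.mul_left (isBlockTransposition_cycleIcc hlt)
        rw [mul_inv_cancel_left] at this
        exact this.mono (by have := Fin.lt_def.mp hlt; omega)
      · have : NeZero n := ⟨by omega⟩
        rw [heq, Fin.cycleIcc_eq, inv_one, one_mul] at hτ'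
        exact hτ'.mono (by omega)
    · exact (ih τ fun x hx => hτ x (by omega)).mono (by omega)

theorem btDist_le_general (n : ℕ) (π ν : Equiv.Perm (Fin n)) :
    btDist n π ν ≤ n - 1 :=
  btDist_le_of_isProdBlockTranspositions <|
    isProdBlockTranspositions_of_forall_le_fixed n _ fun x hx => absurd x.is_lt (by omega)

/-- for `n ≥ 2`, any two permutations of `{1,…,n}` are at block
transposition distance at most `n − 1`. -/
theorem btDist_le (n : ℕ) (hn : 2 ≤ n) (π ν : Equiv.Perm (Fin n)) :
    btDist n π ν ≤ n - 1 :=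
  btDist_le_general n π ν
end

section
/- (Shifting Lemma) Let σ(i,j,k) be any block transposition of Sym_n and let r be an integer with 0 ≤ r ≤ n. Then there exists a block transposition σ(i',j',k') of Sym_n such that [0 σ(i,j,k)] ∘ α^r = α^{[0 σ(i,j,k)]_r} ∘ [0 σ(i',j',k')], where [0 σ(i,j,k)]_r denotes the image of r under [0 σ(i,j,k)]. -/
/-! ### Auxiliary material for the shifting lemma -/

set_option maxHeartbeats 1000000

/-- The block-transposition value function on `{0,…,n}`. -/
def Fbt (i j k x : ℕ) : ℕ :=
  if x ≤ i ∨ k < x then x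
  else if x ≤ k - j + i then x + (j - i)
  else x - (k - j)

theorem BT.modsplit (n a : ℕ) (h : a < 2*(n+1)) :
    a % (n+1) = if a < n+1 then a else a - (n+1) := by
  split_ifs with h1
  · exact Nat.mod_eq_of_lt h1
  · rw [Nat.mod_eq_sub_mod (by omega)]
    exact Nat.mod_eq_of_lt (by omega)

theorem BT.Fbt_spec (i j k x : ℕ) (h1 : i < j) (h2 : j < k) :
    ((x ≤ i ∨ k < x) ∧ Fbt i j k x = x) ∨
    (i < x ∧ x ≤ k - j + i ∧ Fbt i j k x = x + (j - i)) ∨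
    (k - j + i < x ∧ x ≤ k ∧ Fbt i j k x = x - (k - j)) := by
  unfold Fbt; split_ifs <;> omega

theorem BT.Fbt_le (n i j k x : ℕ) (h1 : i < j) (h2 : j < k) (h3 : k ≤ n) (hx : x ≤ n) :
    Fbt i j k x ≤ n := by
  unfold Fbt; split_ifs <;> omega

theorem BT.keyGen (n i j k r x i' j' k' : ℕ) (h1 : i < j) (h2 : j < k) (h3 : k ≤ n)
    (h1' : i' < j') (h2' : j' < k')
    (hr : r ≤ n) (hx : x ≤ n)
    (hcase : (r ≤ i ∧ i' = i - r ∧ j' = j - r ∧ k' = k - r) ∨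
      (i < r ∧ r ≤ i + k - j ∧ i' = i + k - j - r ∧ j' = i + i + n + 1 - j - r ∧ k' = i + n + 1 - r) ∨
      (i + k - j < r ∧ r ≤ k ∧ i' = k - r ∧ j' = k + k - j - r ∧ k' = i + k - j + n + 1 - r) ∨
      (k < r ∧ i' = i + n + 1 - r ∧ j' = j + n + 1 - r ∧ k' = k + n + 1 - r)) :
    (Fbt i j k ((x + r) % (n+1)) + ((n+1) - Fbt i j k r)) % (n+1) = Fbt i' j' k' x := by
  rw [BT.modsplit n (x+r) (by omega)]
  have hFr : Fbt i j k r ≤ n := BT.Fbt_le n i j k r h1 h2 h3 hr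
  have hsr := BT.Fbt_spec i j k r h1 h2
  have hs' := BT.Fbt_spec i' j' k' x h1' h2'
  by_cases hc0 : x + r < n + 1
  · rw [if_pos hc0]
    have hFy : Fbt i j k (x+r) ≤ n := BT.Fbt_le n i j k (x+r) h1 h2 h3 (by omega)
    have hsy := BT.Fbt_spec i j k (x+r) h1 h2
    rw [BT.modsplit n _ (by omega)]
    split_ifs <;> omega
  · rw [if_neg hc0]
    have hFy : Fbt i j k (x+r-(n+1)) ≤ n := BT.Fbt_le n i j k _ h1 h2 h3 (by omega)
    have hsy := BT.Fbt_spec i j k (x+r-(n+1)) h1 h2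
    rw [BT.modsplit n _ (by omega)]
    split_ifs <;> omega

theorem BT.rot_pow_val (n s : ℕ) (x : Fin (n+1)) :
    (((finRotate (n+1))^s) x).val = (x.val + s) % (n+1) := by
  induction s with
  | zero => simp [Nat.mod_eq_of_lt x.isLt]
  | succ s ih =>
    rw [pow_succ', Equiv.Perm.mul_apply, finRotate_succ_apply, Fin.val_add, Fin.val_one', ih,
      Nat.mod_add_mod]
    conv_rhs => rw [show ↑x + (s + 1) = ↑x + s + 1 by omega, Nat.add_mod (↑x + s) 1 (n+1)]
    rw [Nat.mod_add_mod]

theorem BT.rot_pow_n (n : ℕ) : ((finRotate (n+1))^(n+1)) = 1 := by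
  ext x
  rw [BT.rot_pow_val, Nat.add_mod_right, Nat.mod_eq_of_lt x.isLt]
  rfl

theorem BT.zeroExtend_zero {n : ℕ} (π : Equiv.Perm (Fin n)) : zeroExtend π 0 = 0 :=
  Equiv.Perm.decomposeFin_symm_apply_zero 0 π

theorem BT.zeroExtend_succ {n : ℕ} (π : Equiv.Perm (Fin n)) (t : Fin n) :
    zeroExtend π t.succ = (π t).succ := by
  rw [zeroExtend, Equiv.Perm.decomposeFin_symm_apply_succ]
  simp

set_option maxHeartbeats 1000000

/-- Shifting Lemma: for any block transposition `σ(i,j,k)` of `Sym_n`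
and any `0 ≤ r ≤ n` there is a block transposition `σ(i',j',k')` with
`[0 σ(i,j,k)] ∘ αʳ = α^{[0 σ(i,j,k)]_r} ∘ [0 σ(i',j',k')]`. -/
theorem shifting_lemma (n i j k r : ℕ) (hr : r ≤ n) (σ : Equiv.Perm (Fin n))
    (hσ : IsBlockTranspositionOf n i j k σ) :
    ∃ (i' j' k' : ℕ) (σ' : Equiv.Perm (Fin n)),
      IsBlockTranspositionOf n i' j' k' σ' ∧
        zeroExtend σ * (finRotate (n + 1)) ^ r =
          (finRotate (n + 1)) ^ ((zeroExtend σ ⟨r, by omega⟩ : Fin (n + 1)).val) *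
            zeroExtend σ' := by
  obtain ⟨hij, hjk, hkn, hσf⟩ := hσ
  -- `zeroExtend σ` is given by `Fbt i j k` on values
  have hzval : ∀ y : Fin (n+1), ((zeroExtend σ) y).val = Fbt i j k y.val := by
    intro y
    induction y using Fin.cases with
    | zero =>
      rw [BT.zeroExtend_zero]
      show 0 = Fbt i j k 0
      unfold Fbt
      rw [if_pos (Or.inl (Nat.zero_le i))]
    | succ t =>
      rw [BT.zeroExtend_succ, Fin.val_succ, Fin.val_succ]
      exact hσf t
  have hPle : Fbt i j k r ≤ n := BT.Fbt_le n i j k r hij hjk hkn hr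
  have hpval : ((zeroExtend σ (⟨r, by omega⟩ : Fin (n+1))).val) = Fbt i j k r := by
    rw [hzval]
  rw [hpval]
  -- the candidate permutation of `{0,…,n}`
  set τ := ((finRotate (n+1))^(n+1-Fbt i j k r)) * (zeroExtend σ * ((finRotate (n+1))^r))
    with hτdef
  have hτ0 : τ 0 = 0 := by
    apply Fin.ext
    rw [hτdef]
    simp only [Equiv.Perm.mul_apply]
    have h0 : (((finRotate (n+1))^r)) (0 : Fin (n+1)) = (⟨r, by omega⟩ : Fin (n+1)) := by
      apply Fin.ext
      rw [BT.rot_pow_val]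
      simp [Nat.mod_eq_of_lt (show r < n+1 by omega)]
    rw [h0, BT.rot_pow_val, hpval, show Fbt i j k r + (n+1-Fbt i j k r) = n+1 by omega,
      Nat.mod_self]
    rfl
  -- split off the fixed point 0
  rcases hEq : Equiv.Perm.decomposeFin τ with ⟨e, q⟩
  have hτsymm : Equiv.Perm.decomposeFin.symm (e, q) = τ := by
    rw [← hEq]; exact Equiv.symm_apply_apply _ _
  have he : e = 0 := by
    have h1 : Equiv.Perm.decomposeFin.symm (e, q) 0 = e :=
      Equiv.Perm.decomposeFin_symm_apply_zero e q
    rw [hτsymm, hτ0] at h1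
    exact h1.symm
  have hq : zeroExtend q = τ := by rw [zeroExtend, ← he, hτsymm]
  -- the commuting equation
  have heq : zeroExtend σ * (finRotate (n + 1)) ^ r =
      (finRotate (n + 1)) ^ (Fbt i j k r) * zeroExtend q := by
    rw [hq, hτdef, ← mul_assoc, ← pow_add,
      show Fbt i j k r + (n+1-Fbt i j k r) = n+1 by omega, BT.rot_pow_n, one_mul]
  -- value formula for `q`
  have hqval : ∀ t : Fin n, (q t).val + 1 =
      (Fbt i j k ((t.val + 1 + r) % (n+1)) + ((n+1) - Fbt i j k r)) % (n+1) := by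
    intro t
    calc (q t).val + 1 = ((zeroExtend q) t.succ).val := by
          rw [BT.zeroExtend_succ, Fin.val_succ]
      _ = _ := by
          rw [hq, hτdef]
          simp only [Equiv.Perm.mul_apply]
          rw [BT.rot_pow_val, hzval, BT.rot_pow_val, Fin.val_succ]
  -- case analysis on the position of r
  rcases le_or_gt r i with hA | hA
  · refine ⟨i - r, j - r, k - r, q, ⟨by omega, by omega, by omega, fun t => ?_⟩, heq⟩
    rw [hqval t]
    exact BT.keyGen n i j k r (t.val+1) _ _ _ hij hjk hkn (by omega) (by omega) hr
      (by have := t.isLt; omega) (Or.inl ⟨hA, rfl, rfl, rfl⟩)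
  rcases le_or_gt r (i + k - j) with hB | hB
  · refine ⟨i + k - j - r, i + i + n + 1 - j - r, i + n + 1 - r, q,
      ⟨by omega, by omega, by omega, fun t => ?_⟩, heq⟩
    rw [hqval t]
    exact BT.keyGen n i j k r (t.val+1) _ _ _ hij hjk hkn (by omega) (by omega) hr
      (by have := t.isLt; omega) (Or.inr (Or.inl ⟨hA, hB, rfl, rfl, rfl⟩))
  rcases le_or_gt r k with hC | hC
  · refine ⟨k - r, k + k - j - r, i + k - j + n + 1 - r, q,
      ⟨by omega, by omega, by omega, fun t => ?_⟩, heq⟩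
    rw [hqval t]
    exact BT.keyGen n i j k r (t.val+1) _ _ _ hij hjk hkn (by omega) (by omega) hr
      (by have := t.isLt; omega) (Or.inr (Or.inr (Or.inl ⟨hB, hC, rfl, rfl, rfl⟩)))
  · refine ⟨i + n + 1 - r, j + n + 1 - r, k + n + 1 - r, q,
      ⟨by omega, by omega, by omega, fun t => ?_⟩, heq⟩
    rw [hqval t]
    exact BT.keyGen n i j k r (t.val+1) _ _ _ hij hjk hkn (by omega) (by omega) hr
      (by have := t.isLt; omega) (Or.inr (Or.inr (Or.inr ⟨hC, rfl, rfl, rfl⟩)))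
end

section
/- (Invariance principle, part I) If two permutations π and π' of {1,…,n} are torically equivalent, then their block transposition distances are equal: d(π) = d(π'). -/
/-!
Write `[0 π]` for `π` extended by `0 ↦ 0` to a permutation of `ℤ/(n+1)`. Toric equivalence says
`[0 π'] = Ω_r [0 π]` for some `r`, where `Ω_r g : x ↦ g (x + r) - g r`. The map `Ω` satisfies the
cocycle rule `Ω_r (g h) = Ω_{h r} g * Ω_r h`, and it sends the extension of a block transposition
to the extension of a block transposition (rotating the cyclic sequence `0 1 ⋯ n` keeps a swap of
two adjacent arcs a swap of two adjacent arcs). Hence a factorization of `π` into `m` block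
transpositions yields one of `π'` of the same length, and `Ω_{-r}` undoes `Ω_r`.
-/

open Equiv

section ToricShift

variable {G : Type*} [AddGroup G]

/-- The paper's toric map `Ω_r`, acting on permutations of the cyclic group of positions. -/
def toricShift (r : G) (g : Perm G) : Perm G :=
  (Equiv.addRight r).trans (g.trans (Equiv.subRight (g r)))

@[simp]
lemma toricShift_apply (r : G) (g : Perm G) (x : G) : toricShift r g x = g (x + r) - g r :=
  rfl

lemma toricShift_apply_zero (r : G) (g : Perm G) : toricShift r g 0 = 0 := by
  simp

lemma toricShift_one (r : G) : toricShift r (1 : Perm G) = 1 := by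
  ext x
  simp

lemma toricShift_mul (r : G) (g h : Perm G) :
    toricShift r (g * h) = toricShift (h r) g * toricShift r h := by
  ext x
  simp

lemma toricShift_neg_toricShift {g : Perm G} (hg : g 0 = 0) (r : G) :
    toricShift (-r) (toricShift r g) = g := by
  ext x
  simp [hg]

end ToricShift

section ZeroExtend

variable {n : ℕ}

@[simp]
lemma zeroExtend_apply_zero (π : Perm (Fin n)) : zeroExtend π 0 = 0 := by
  simp [zeroExtend]

@[simp]
lemma zeroExtend_apply_succ (π : Perm (Fin n)) (t : Fin n) :
    zeroExtend π t.succ = (π t).succ := by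
  simp [zeroExtend]

lemma zeroExtend_one : zeroExtend (1 : Perm (Fin n)) = 1 := by
  ext x
  cases x using Fin.cases <;> simp

lemma zeroExtend_mul (π ρ : Perm (Fin n)) :
    zeroExtend (π * ρ) = zeroExtend π * zeroExtend ρ := by
  ext x
  cases x using Fin.cases <;> simp

lemma zeroExtend_injective : Function.Injective (zeroExtend : Perm (Fin n) → _) :=
  fun _ _ h => congrArg Prod.snd (Perm.decomposeFin.symm.injective h)

lemma exists_zeroExtend_eq {g : Perm (Fin (n + 1))} (hg : g 0 = 0) :
    ∃ π : Perm (Fin n), zeroExtend π = g := by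
  have hfst : (Perm.decomposeFin g).1 = 0 := by
    have h := Perm.decomposeFin_symm_apply_zero (Perm.decomposeFin g).1 (Perm.decomposeFin g).2
    rwa [Prod.mk.eta, Equiv.symm_apply_apply, hg, eq_comm] at h
  refine ⟨(Perm.decomposeFin g).2, ?_⟩
  rw [zeroExtend, ← hfst, Prod.mk.eta, Equiv.symm_apply_apply]

end ZeroExtend

/-- `σ(i,j,k)` as a map on `ℕ`; it also fixes `0`, so it describes `[0 σ(i,j,k)]`. -/
def btMap (i j k t : ℕ) : ℕ :=
  if t ≤ i ∨ k < t then t else if t ≤ k - j + i then t + (j - i) else t - (k - j)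

/-- Rotating the cyclic sequence by `b` moves the cut points `i < j < k`; which of them wrap
around depends on which of the four stretches `[0,i]`, `(i, k-j+i]`, `(k-j+i, k]`, `(k, n]`
contains `b`. -/
lemma exists_btMap_rotate {n i j k b : ℕ} (hij : i < j) (hjk : j < k) (hkn : k ≤ n)
    (hb : b ≤ n) :
    ∃ i' j' k', i' < j' ∧ j' < k' ∧ k' ≤ n ∧ ∀ u, 1 ≤ u → u ≤ n →
      (n + 1 - btMap i j k b + btMap i j k ((u + b) % (n + 1))) % (n + 1) = btMap i' j' k' u := by
  have mod_eq : ∀ {X D : ℕ}, D < n + 1 → (X = D ∨ X = D + (n + 1)) → X % (n + 1) = D := by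
    rintro X D hD (rfl | rfl) <;> simp [Nat.mod_eq_of_lt hD]
  have hwrap : ∀ u ≤ n, (u + b) % (n + 1) = u + b ∧ u + b < n + 1 ∨
      (u + b) % (n + 1) = u + b - (n + 1) ∧ n + 1 ≤ u + b := by
    intro u hun
    rcases Nat.lt_or_ge (u + b) (n + 1) with h | h
    · exact Or.inl ⟨Nat.mod_eq_of_lt h, h⟩
    · exact Or.inr ⟨by rw [Nat.mod_eq_sub_mod h, Nat.mod_eq_of_lt (by omega)], h⟩
  obtain ⟨i', j', k', hij', hjk', hkn', hcut⟩ : ∃ i' j' k', i' < j' ∧ j' < k' ∧ k' ≤ n ∧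
      (b ≤ i ∧ i' = i - b ∧ j' = j - b ∧ k' = k - b ∨
        i < b ∧ b ≤ k - j + i ∧ i' = k - j + i - b ∧ j' = n + 1 + 2 * i - (j + b) ∧
          k' = n + 1 + i - b ∨
        k - j + i < b ∧ b ≤ k ∧ i' = k - b ∧ j' = 2 * k - (j + b) ∧
          k' = n + 1 + i + k - (j + b) ∨
        k < b ∧ i' = n + 1 + i - b ∧ j' = n + 1 + j - b ∧ k' = n + 1 + k - b) := by
    rcases (by omega : b ≤ i ∨ i < b ∧ b ≤ k - j + i ∨ k - j + i < b ∧ b ≤ k ∨ k < b) with hb' | hb' | hb' | hb'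
    · exact ⟨i - b, j - b, k - b, by omega, by omega, by omega, by omega⟩
    · exact ⟨k - j + i - b, n + 1 + 2 * i - (j + b), n + 1 + i - b, by omega, by omega,
        by omega, by omega⟩
    · exact ⟨k - b, 2 * k - (j + b), n + 1 + i + k - (j + b), by omega, by omega, by omega,
        by omega⟩
    · exact ⟨n + 1 + i - b, n + 1 + j - b, n + 1 + k - b, by omega, by omega, by omega,
        by omega⟩
  refine ⟨i', j', k', hij', hjk', hkn', fun u hu1 hun => ?_⟩
  rcases hwrap u hun with ⟨hm, hw⟩ | ⟨hm, hw⟩ <;> rw [hm] <;> unfold btMap <;>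
    split_ifs <;> (apply mod_eq <;> omega)

lemma IsBlockTranspositionOf.val_zeroExtend {n i j k : ℕ} {σ : Perm (Fin n)}
    (h : IsBlockTranspositionOf n i j k σ) (y : Fin (n + 1)) :
    (zeroExtend σ y : ℕ) = btMap i j k y := by
  cases y using Fin.cases with
  | zero => simp [btMap]
  | succ t =>
    rw [zeroExtend_apply_succ, Fin.val_succ]
    exact h.2.2.2 t

lemma IsBlockTransposition.exists_zeroExtend_eq_toricShift {n : ℕ} {σ : Perm (Fin n)}
    (hσ : IsBlockTransposition n σ) (b : Fin (n + 1)) :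
    ∃ τ, IsBlockTransposition n τ ∧ zeroExtend τ = toricShift b (zeroExtend σ) := by
  obtain ⟨i, j, k, hσ⟩ := hσ
  obtain ⟨τ, hτ⟩ := exists_zeroExtend_eq (toricShift_apply_zero b (zeroExtend σ))
  obtain ⟨i', j', k', hij', hjk', hkn', hrot⟩ :=
    exists_btMap_rotate hσ.1 hσ.2.1 hσ.2.2.1 (Nat.lt_succ_iff.mp b.isLt)
  refine ⟨τ, ⟨i', j', k', hij', hjk', hkn', fun t => ?_⟩, hτ⟩
  calc (τ t : ℕ) + 1 = zeroExtend τ t.succ := by simp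
    _ = (n + 1 - btMap i j k b + btMap i j k ((t + 1 + b) % (n + 1))) % (n + 1) := by
      simp only [hτ, toricShift_apply, Fin.sub_def, Fin.add_def, hσ.val_zeroExtend, Fin.val_succ]
    _ = btMap i' j' k' (t + 1) := hrot _ (Nat.succ_pos _) t.isLt

lemma exists_zeroExtend_prod_eq_toricShift {n : ℕ} (l : List (Perm (Fin n)))
    (hl : ∀ σ ∈ l, IsBlockTransposition n σ) (b : Fin (n + 1)) :
    ∃ l' : List (Perm (Fin n)), l'.length = l.length ∧ (∀ σ ∈ l', IsBlockTransposition n σ) ∧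
      zeroExtend l'.prod = toricShift b (zeroExtend l.prod) := by
  induction l generalizing b with
  | nil => exact ⟨[], rfl, by simp, by simp [zeroExtend_one, toricShift_one]⟩
  | cons σ l ih =>
    rw [List.forall_mem_cons] at hl
    obtain ⟨l', hlen, hl', hprod⟩ := ih hl.2 b
    obtain ⟨τ, hτ, hτσ⟩ := hl.1.exists_zeroExtend_eq_toricShift (zeroExtend l.prod b)
    refine ⟨τ :: l', by simp [hlen], List.forall_mem_cons.2 ⟨hτ, hl'⟩, ?_⟩
    rw [List.prod_cons, List.prod_cons, zeroExtend_mul, zeroExtend_mul, toricShift_mul, hτσ, hprod]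

lemma exists_factorization_of_zeroExtend_eq_toricShift {n m : ℕ} {ρ ρ' : Perm (Fin n)}
    {r : Fin (n + 1)} (h : zeroExtend ρ' = toricShift r (zeroExtend ρ))
    (hρ : ∃ l : List (Perm (Fin n)),
      l.length = m ∧ (∀ σ ∈ l, IsBlockTransposition n σ) ∧ ρ = 1 * l.prod) :
    ∃ l : List (Perm (Fin n)),
      l.length = m ∧ (∀ σ ∈ l, IsBlockTransposition n σ) ∧ ρ' = 1 * l.prod := by
  obtain ⟨l, rfl, hl, rfl⟩ := hρ
  obtain ⟨l', hlen, hl', hprod⟩ := exists_zeroExtend_prod_eq_toricShift l hl r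
  exact ⟨l', hlen, hl', zeroExtend_injective (by rw [one_mul, h, hprod, one_mul])⟩

open Fin.NatCast in
lemma seqVal_eq_val_zeroExtend (n : ℕ) (π : Perm (Fin n)) (x : ℕ) :
    seqVal n π x = zeroExtend π (x : Fin (n + 1)) := by
  have hlt : x % (n + 1) < n + 1 := Nat.mod_lt _ n.succ_pos
  unfold seqVal
  split_ifs with h
  · have hx : (x : Fin (n + 1)) = 0 := Fin.ext (by simp [Fin.val_natCast, h])
    simp [hx]
  · have hx : (x : Fin (n + 1)) = (⟨x % (n + 1) - 1, by omega⟩ : Fin n).succ :=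
      Fin.ext (by simp [Fin.val_natCast]; omega)
    rw [hx, zeroExtend_apply_succ, Fin.val_succ]

open Fin.NatCast in
lemma ToricEquiv.exists_zeroExtend_eq_toricShift {n : ℕ} {π π' : Perm (Fin n)}
    (h : ToricEquiv n π π') : ∃ r : Fin (n + 1), zeroExtend π' = toricShift r (zeroExtend π) := by
  obtain ⟨r, -, hr⟩ := h
  refine ⟨r, Equiv.ext fun x => ?_⟩
  cases x using Fin.cases with
  | zero => simp
  | succ t =>
    have hx : ((t + 1 : ℕ) : Fin (n + 1)) = t.succ := Fin.ext (by simp)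
    have hcong := hr (t + 1) (Nat.succ_pos _) t.isLt
    simp only [seqVal_eq_val_zeroExtend, Nat.cast_add, hx] at hcong
    have hlt : (zeroExtend π (r : Fin (n + 1)) : ℕ) < n + 1 := Fin.is_lt _
    apply Fin.ext
    rw [toricShift_apply, Fin.sub_def, ← Nat.mod_eq_of_lt (Fin.is_lt (zeroExtend π' t.succ)), hcong]
    congr 1
    omega

/-- Invariance principle, part I: torically equivalent permutations
have the same block transposition distance. -/
theorem toricEquiv_btDist (n : ℕ) (π π' : Equiv.Perm (Fin n))
    (h : ToricEquiv n π π') : btDist n 1 π = btDist n 1 π' := by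
  obtain ⟨r, hr⟩ := h.exists_zeroExtend_eq_toricShift
  have hr' : zeroExtend π = toricShift (-r) (zeroExtend π') := by
    rw [hr, toricShift_neg_toricShift (zeroExtend_apply_zero π)]
  unfold btDist
  congr 1
  ext m
  exact ⟨exists_factorization_of_zeroExtend_eq_toricShift hr,
    exists_factorization_of_zeroExtend_eq_toricShift hr'⟩
end

section
/- If two permutations π and π' of {1,…,n} are torically equivalent, then π and π' have the same number of bonds. -/
lemma seqVal_congr (n : ℕ) (π : Equiv.Perm (Fin n)) {x y : ℕ}
    (h : x % (n + 1) = y % (n + 1)) : seqVal n π x = seqVal n π y := by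
  unfold seqVal; simp only [h]

lemma seqVal_lt (n : ℕ) (π : Equiv.Perm (Fin n)) (x : ℕ) : seqVal n π x < n + 1 := by
  unfold seqVal; split
  · omega
  · exact Nat.succ_lt_succ (π _).isLt

lemma seqVal_pos (n : ℕ) (π : Equiv.Perm (Fin n)) {x : ℕ} (h : x % (n + 1) ≠ 0) :
    1 ≤ seqVal n π x := by
  unfold seqVal; rw [dif_neg h]; omega

lemma seqVal_zero (n : ℕ) (π : Equiv.Perm (Fin n)) : seqVal n π 0 = 0 := by
  unfold seqVal; simp

lemma extSeq_eq_seqVal (n : ℕ) (π : Equiv.Perm (Fin n)) {x : ℕ} (hx : x ≤ n) :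
    extSeq n π x = seqVal n π x := by
  rcases Nat.eq_zero_or_pos x with h0 | h1
  · subst h0; rw [seqVal_zero]; unfold extSeq; simp
  · have hm : x % (n + 1) = x := Nat.mod_eq_of_lt (by omega)
    unfold extSeq seqVal
    rw [dif_pos ⟨h1, hx⟩, dif_neg (by omega)]
    congr 2
    exact Fin.ext (by simp [hm])

lemma bondCount_eq (n : ℕ) (π : Equiv.Perm (Fin n)) :
    bondCount n π = ((Finset.range (n + 1)).filter fun t =>
      seqVal n π (t + 1) % (n + 1) = (seqVal n π t + 1) % (n + 1)).card := by
  unfold bondCount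
  congr 1
  apply Finset.filter_congr
  intro t ht
  simp only [Finset.mem_range] at ht
  have htn : t ≤ n := by omega
  have ha : extSeq n π t = seqVal n π t := extSeq_eq_seqVal n π htn
  have hlt : seqVal n π t < n + 1 := seqVal_lt n π t
  rcases Nat.lt_or_ge t n with hc | hc
  · -- t + 1 ≤ n
    have hb : extSeq n π (t + 1) = seqVal n π (t + 1) := extSeq_eq_seqVal n π (by omega)
    have hblt : seqVal n π (t + 1) < n + 1 := seqVal_lt n π (t + 1)
    have hbpos : 1 ≤ seqVal n π (t + 1) :=
      seqVal_pos n π (by rw [Nat.mod_eq_of_lt (by omega)]; omega)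
    rw [ha, hb]
    constructor
    · intro he
      rw [he]
    · intro he
      rcases Nat.lt_or_ge (seqVal n π t + 1) (n + 1) with hlt2 | hge2
      · rw [Nat.mod_eq_of_lt hblt, Nat.mod_eq_of_lt hlt2] at he; exact he
      · have : seqVal n π t + 1 = n + 1 := by omega
        rw [Nat.mod_eq_of_lt hblt, this, Nat.mod_self] at he; omega
  · -- t = n
    have ht' : t = n := by omega
    subst ht'
    have hext : extSeq t π (t + 1) = t + 1 := by unfold extSeq; simp
    have hsv : seqVal t π (t + 1) = 0 := by
      rw [seqVal_congr t π (x := t + 1) (y := 0) (by simp), seqVal_zero]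
    rw [ha, hext, hsv]
    constructor
    · intro he
      have h2 : seqVal t π t + 1 = t + 1 := by omega
      rw [h2, Nat.mod_self, Nat.zero_mod]
    · intro he
      rcases Nat.lt_or_ge (seqVal t π t + 1) (t + 1) with hlt2 | hge2
      · rw [Nat.zero_mod, Nat.mod_eq_of_lt hlt2] at he; omega
      · omega

lemma shift_mod_cancel (N r a : ℕ) (hN : 0 < N) :
    (a + r + (N - r % N)) % N = a % N := by
  have h1 := Nat.mod_add_div r N
  have h2 : r % N < N := Nat.mod_lt _ hN
  have h4 : N * (r / N + 1) = N * (r / N) + N := by ring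
  have h3 : a + r + (N - r % N) = a + N * (r / N + 1) := by omega
  rw [h3, Nat.add_mul_mod_self_left]

/-- torically equivalent permutations have the same number of bonds. -/
theorem toricEquiv_bondCount (n : ℕ) (π π' : Equiv.Perm (Fin n))
    (h : ToricEquiv n π π') : bondCount n π = bondCount n π' := by
  obtain ⟨r, hrn, hr⟩ := h
  have hslt : seqVal n π r < n + 1 := seqVal_lt n π r
  -- the key congruence, for all x
  have key : ∀ x : ℕ, seqVal n π' x % (n + 1)
      = (seqVal n π (x + r) + (n + 1 - seqVal n π r)) % (n + 1) := by
    have key0 : ∀ x : ℕ, x ≤ n → seqVal n π' x % (n + 1)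
        = (seqVal n π (x + r) + (n + 1 - seqVal n π r)) % (n + 1) := by
      intro x hx
      rcases Nat.eq_zero_or_pos x with h0 | h1
      · subst h0
        rw [seqVal_zero, Nat.zero_mod, Nat.zero_add]
        have h2 : seqVal n π r + (n + 1 - seqVal n π r) = n + 1 := by omega
        rw [h2, Nat.mod_self]
      · have h3 := hr x h1 hx
        unfold Nat.ModEq at h3
        rw [h3]
        congr 1
        omega
    intro x
    have hxm : x % (n + 1) ≤ n := by
      have := Nat.mod_lt x (y := n + 1) (by omega)
      omega
    have e1 : seqVal n π' x = seqVal n π' (x % (n + 1)) :=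
      seqVal_congr n π' (Nat.mod_mod_of_dvd x dvd_rfl).symm
    have e2 : seqVal n π (x + r) = seqVal n π (x % (n + 1) + r) :=
      seqVal_congr n π (Nat.mod_add_mod x (n + 1) r).symm
    rw [e1, e2]
    exact key0 (x % (n + 1)) hxm
  -- pointwise equivalence of bond conditions
  have hiff : ∀ t : ℕ,
      (seqVal n π' (t + 1) % (n + 1) = (seqVal n π' t + 1) % (n + 1)) ↔
      (seqVal n π ((t + r) % (n + 1) + 1) % (n + 1)
        = (seqVal n π ((t + r) % (n + 1)) + 1) % (n + 1)) := by
    intro t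
    have hA : seqVal n π ((t + r) % (n + 1) + 1) = seqVal n π (t + 1 + r) :=
      seqVal_congr n π (by rw [Nat.mod_add_mod]; congr 1; omega)
    have hB : seqVal n π ((t + r) % (n + 1)) = seqVal n π (t + r) :=
      seqVal_congr n π (Nat.mod_mod_of_dvd (t + r) dvd_rfl)
    have lhs2 : (seqVal n π' t + 1) % (n + 1)
        = (seqVal n π (t + r) + (n + 1 - seqVal n π r) + 1) % (n + 1) := by
      rw [← Nat.mod_add_mod, key t, Nat.mod_add_mod]
    rw [hA, hB, key (t + 1), lhs2]
    constructor
    · intro he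
      have h1 : seqVal n π (t + 1 + r) + (n + 1 - seqVal n π r)
          ≡ seqVal n π (t + r) + 1 + (n + 1 - seqVal n π r) [MOD n + 1] := by
        have h0 : seqVal n π (t + r) + (n + 1 - seqVal n π r) + 1
            = seqVal n π (t + r) + 1 + (n + 1 - seqVal n π r) := by ring
        unfold Nat.ModEq
        rw [← h0]; exact he
      have h2 := Nat.ModEq.add_right_cancel' _ h1
      have h3 : (t + 1 + r) = (t + r + 1) := by ring
      exact h2
    · intro he
      have h1 : seqVal n π (t + 1 + r) ≡ seqVal n π (t + r) + 1 [MOD n + 1] := he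
      have h2 := h1.add_right (n + 1 - seqVal n π r)
      have h0 : seqVal n π (t + r) + 1 + (n + 1 - seqVal n π r)
          = seqVal n π (t + r) + (n + 1 - seqVal n π r) + 1 := by ring
      unfold Nat.ModEq at h2
      rw [h0] at h2
      exact h2
  rw [bondCount_eq n π, bondCount_eq n π']
  rw [show ((Finset.range (n + 1)).filter fun t =>
      seqVal n π' (t + 1) % (n + 1) = (seqVal n π' t + 1) % (n + 1)) =
      ((Finset.range (n + 1)).filter fun t =>
      seqVal n π ((t + r) % (n + 1) + 1) % (n + 1)
        = (seqVal n π ((t + r) % (n + 1)) + 1) % (n + 1)) from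
    Finset.filter_congr fun t _ => hiff t]
  -- bijection u ↦ (u + ((n+1) - r % (n+1))) % (n+1) from π-bonds to shifted set
  have hNpos : 0 < n + 1 := Nat.succ_pos n
  have hcan : ∀ a : ℕ, a < n + 1 →
      ((a + (n + 1 - r % (n + 1))) % (n + 1) + r) % (n + 1) = a := by
    intro a ha
    rw [Nat.mod_add_mod, show a + (n + 1 - r % (n + 1)) + r
        = a + r + (n + 1 - r % (n + 1)) by ring,
      shift_mod_cancel (n + 1) r a hNpos, Nat.mod_eq_of_lt ha]
  apply Finset.card_bij' (i := fun u _ => (u + (n + 1 - r % (n + 1))) % (n + 1))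
    (j := fun t _ => (t + r) % (n + 1))
  · intro a ha
    simp only [Finset.mem_filter, Finset.mem_range] at ha ⊢
    refine ⟨Nat.mod_lt _ hNpos, ?_⟩
    rw [hcan a ha.1]
    exact ha.2
  · intro a ha
    simp only [Finset.mem_filter, Finset.mem_range] at ha ⊢
    exact ⟨Nat.mod_lt _ hNpos, ha.2⟩
  · intro a ha
    simp only [Finset.mem_filter, Finset.mem_range] at ha
    exact hcan a ha.1
  · intro a ha
    simp only [Finset.mem_filter, Finset.mem_range] at ha
    rw [Nat.mod_add_mod, shift_mod_cancel (n + 1) r a hNpos, Nat.mod_eq_of_lt ha.1]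
end

section
/- (Criterion for a 2-move to the right, case (ii)) Let π̄ be a permutation of {0,1,…,n} such that there exist positions p < q with q+1 ≤ n satisfying π̄_q ≡ π̄_p − 1 (mod n+1) and π̄_{q+1} ≡ π̄_p + 1 (mod n+1) (i.e., π̄ has the pattern [⋯ x ⋯ x̲ x̄ ⋯] where x̲, x̄ denote x−1, x+1 mod n+1). Then there exists a block transposition σ̄ of {0,1,…,n} such that π̄∘σ̄ has at least two more bonds than π̄. -/
/-!
Write `x = π̄_p`, so that `π̄_q = x - 1` and `π̄_{q+1} = x + 1`. The block transposition
`σ̄(p - 1, p, q)` is the cycle `(p p+1 … q)` (`Fin.cycleIcc p q`): it moves `x` between `x - 1`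
and `x + 1`, creating bonds at `q - 1` and `q`. The only adjacent pairs of positions it tears
apart are `(p - 1, p)`, `(p, p + 1)` and `(q, q + 1)`, and the pattern forces none of them to be a
bond of `π̄`; every other adjacent pair is carried to an adjacent pair, so the old bonds inject
into the bonds of `π̄ ∘ σ̄` other than the two new ones.
-/

open Equiv Finset

namespace Fin

theorem val_cycleIcc {n : ℕ} {i j : Fin (n + 1)} (hij : i ≤ j) (k : Fin (n + 1)) :
    (cycleIcc i j k : ℕ) =
      if k < i ∨ j < k then (k : ℕ) else if k < j then (k : ℕ) + 1 else i := by
  rcases lt_or_ge k i with hki | hik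
  · simp [cycleIcc_of_lt hki, hki]
  rcases lt_or_ge j k with hjk | hkj
  · simp [cycleIcc_of_gt hjk, hjk]
  rw [cycleIcc_of_le_of_le hik hkj]
  rcases eq_or_lt_of_le hkj with rfl | hkj
  · simp [not_lt.mpr hik]
  · simp [hkj.ne, hkj, not_lt.mpr hik, not_lt.mpr hkj.le,
      val_add_one_of_lt (hkj.trans_le (le_last j))]

theorem exists_cycleIcc_adjacent {n : ℕ} {i j : Fin (n + 1)} (hij : i < j) (t : Fin n)
    (hsucc : t.succ ≠ i) (hi : t.castSucc ≠ i) (hj : t.castSucc ≠ j) :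
    ∃ s : Fin n, cycleIcc i j s.castSucc = t.castSucc ∧ cycleIcc i j s.succ = t.succ ∧
      s.castSucc ≠ j ∧ s.succ ≠ j := by
  simp only [ne_eq, Fin.ext_iff, val_castSucc, val_succ, val_cycleIcc hij.le, lt_def] at *
  by_cases hmid : (i : ℕ) < t ∧ (t : ℕ) < j
  · refine ⟨⟨t - 1, by omega⟩, ?_⟩
    dsimp only
    split_ifs <;> omega
  · refine ⟨t, ?_⟩
    split_ifs <;> omega

end Fin

theorem isBlockTransposition0_cycleIcc {n : ℕ} {i j : Fin (n + 1)} (hij : i < j) :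
    IsBlockTransposition0 n (Fin.cycleIcc i j) := by
  refine ⟨(i : ℤ) - 1, i, j, by omega, by omega, by exact_mod_cast hij,
    by exact_mod_cast j.is_le, fun t => ?_⟩
  rw [Fin.val_cycleIcc hij.le]
  simp only [Fin.lt_def]
  split_ifs <;> push_cast <;> omega

section Bonds

variable {n : ℕ}

def bonds (π : Perm (Fin (n + 1))) : Finset (Fin n) :=
  univ.filter fun t => π t.succ = π t.castSucc + 1

theorem mem_bonds {π : Perm (Fin (n + 1))} {t : Fin n} :
    t ∈ bonds π ↔ π t.succ = π t.castSucc + 1 := by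
  simp [bonds]

theorem bondCount0_eq_card_bonds (π : Perm (Fin (n + 1))) : bondCount0 n π = (bonds π).card := by
  unfold bondCount0 bonds
  congr 1
  refine filter_congr fun t _ => ?_
  simp [Fin.ext_iff, Fin.val_add]

theorem card_bonds_add_card_le (π σ : Perm (Fin (n + 1))) (U : Finset (Fin n))
    (hU : U ⊆ bonds (π * σ))
    (hmove : ∀ t ∈ bonds π, ∃ s ∉ U, σ s.castSucc = t.castSucc ∧ σ s.succ = t.succ) :
    (bonds π).card + U.card ≤ (bonds (π * σ)).card := by
  choose! f hfU hfc hfs using hmove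
  have hinj : Set.InjOn f (bonds π) := fun a ha b hb hab =>
    Fin.castSucc_injective _ (by rw [← hfc a ha, ← hfc b hb, hab])
  have hmaps : Set.MapsTo f (bonds π) (bonds (π * σ) \ U : Finset (Fin n)) := by
    intro t ht
    simp only [mem_coe, mem_sdiff, mem_bonds, Perm.mul_apply, hfc t ht, hfs t ht]
    exact ⟨mem_bonds.1 ht, hfU t ht⟩
  have hcard := card_le_card_of_injOn f hmaps hinj
  rw [card_sdiff_of_subset hU] at hcard
  have := card_le_card hU
  omega

end Bonds

section Pattern

variable {n : ℕ} {π : Perm (Fin (n + 1))} {p : Fin (n + 1)} {q : Fin n}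

theorem mem_bonds_avoids_pattern (hpq : p < q.castSucc) (hlow : π q.castSucc + 1 = π p)
    (hhigh : π q.succ = π p + 1) {t : Fin n} (ht : t ∈ bonds π) :
    t.succ ≠ p ∧ t.castSucc ≠ p ∧ t.castSucc ≠ q.castSucc := by
  rw [mem_bonds] at ht
  refine ⟨fun htp => ?_, fun htp => ?_, fun htq => ?_⟩
  · have htq : t = q := Fin.castSucc_injective _ <| π.injective <|
      add_right_cancel (b := 1) (by rw [← ht, htp, hlow])
    subst htq
    exact absurd (htp ▸ hpq) (not_lt.2 Fin.castSucc_lt_succ.le)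
  · have htq : t = q := Fin.succ_injective _ <| π.injective (by rw [ht, htp, hhigh])
    subst htq
    exact hpq.ne htp.symm
  · have htq : t = q := Fin.castSucc_injective _ htq
    subst htq
    have : π p + 1 = π p + 0 := by rw [← hhigh, ht, hlow, add_zero]
    have hn : n + 1 = 1 := Fin.one_eq_zero_iff.1 (add_left_cancel this)
    exact absurd t.pos (by omega)

theorem mem_bonds_mul_cycleIcc_of_succ_eq (hpq : p < q.castSucc) (hlow : π q.castSucc + 1 = π p)
    {r : Fin n} (hr : r.succ = q.castSucc) : r ∈ bonds (π * Fin.cycleIcc p q.castSucc) := by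
  have hpr : p ≤ r.castSucc := Fin.le_castSucc_iff.2 (hr ▸ hpq)
  have hrq : r.castSucc < q.castSucc := hr ▸ Fin.castSucc_lt_succ
  rw [mem_bonds, Perm.mul_apply, Perm.mul_apply, hr, Fin.cycleIcc_of_last hpq.le,
    Fin.cycleIcc_of_ge_of_lt hpr hrq, Fin.coeSucc_eq_succ, hr, hlow]

theorem mem_bonds_mul_cycleIcc_self (hpq : p < q.castSucc) (hhigh : π q.succ = π p + 1) :
    q ∈ bonds (π * Fin.cycleIcc p q.castSucc) := by
  rw [mem_bonds, Perm.mul_apply, Perm.mul_apply, Fin.cycleIcc_of_gt Fin.castSucc_lt_succ,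
    Fin.cycleIcc_of_last hpq.le, hhigh]

end Pattern

/-- 2-move to the right, case (ii): if `π̄` has the pattern
`[⋯ x ⋯ x̲ x̄ ⋯]`, then some block transposition `σ̄` of `{0,…,n}` gives
`π̄∘σ̄` at least two more bonds than `π̄`. -/
theorem two_move_right_ii (n p q : ℕ) (hpq : p < q) (hq : q + 1 ≤ n)
    (π : Equiv.Perm (Fin (n + 1)))
    (h1 : (π ⟨q, by omega⟩).val = ((π ⟨p, by omega⟩).val + n) % (n + 1))
    (h2 : (π ⟨q + 1, by omega⟩).val = ((π ⟨p, by omega⟩).val + 1) % (n + 1)) :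
    ∃ σ : Equiv.Perm (Fin (n + 1)),
      IsBlockTransposition0 n σ ∧ bondCount0 n π + 2 ≤ bondCount0 n (π * σ) := by
  set P : Fin (n + 1) := ⟨p, by omega⟩
  set Q : Fin n := ⟨q, by omega⟩
  set R : Fin n := ⟨q - 1, by omega⟩
  have hPQ : P < Q.castSucc := hpq
  have hlow : π Q.castSucc + 1 = π P := by
    have : π Q.castSucc = π P + Fin.last n :=
      Fin.ext (by rw [Fin.val_add, Fin.val_last]; exact h1)
    rw [this, add_assoc, Fin.last_add_one, add_zero]
  have hhigh : π Q.succ = π P + 1 :=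
    Fin.ext (by rw [Fin.val_add, Fin.val_one', Nat.add_mod_mod]; exact h2)
  refine ⟨Fin.cycleIcc P Q.castSucc, isBlockTransposition0_cycleIcc hPQ, ?_⟩
  have hRQ : ({R, Q} : Finset (Fin n)).card = 2 := card_pair (by simp [R, Q, Fin.ext_iff]; omega)
  rw [bondCount0_eq_card_bonds, bondCount0_eq_card_bonds, ← hRQ]
  refine card_bonds_add_card_le _ _ _ ?_ fun t ht => ?_
  · rw [insert_subset_iff, singleton_subset_iff]
    exact ⟨mem_bonds_mul_cycleIcc_of_succ_eq hPQ hlow (Fin.ext (by simp [R, Q]; omega)),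
      mem_bonds_mul_cycleIcc_self hPQ hhigh⟩
  obtain ⟨hsuccP, hP, hQ⟩ := mem_bonds_avoids_pattern hPQ hlow hhigh ht
  obtain ⟨s, hs, hs', hsQ, hsR⟩ := Fin.exists_cycleIcc_adjacent hPQ t hsuccP hP hQ
  refine ⟨s, ?_, hs, hs'⟩
  simp only [mem_insert, mem_singleton, Fin.ext_iff, Fin.val_succ, Fin.val_castSucc, ne_eq,
    R, Q] at hsQ hsR ⊢
  omega
end

section
/- (Criterion for a 2-move to the left, case (i)) Let π̄ be a permutation of {0,1,…,n} such that there exist positions p and q with p+1 < q < n satisfying: π̄_{q+1} ≡ π̄_p + 1 (mod n+1), and the triple of values x = π̄_p, y = π̄_{p+1}, z = π̄_q is positively oriented, i.e., either x < y < z, or y < z < x, or z < x < y (so π̄ has the pattern [⋯ x y ⋯ z x̄ ⋯]). Then there exists a block transposition σ̄ of {0,1,…,n} such that σ̄∘π̄ has at least two more bonds than π̄. -/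
/-! Acting on values, a block transposition with cuts `a < m < c` keeps every adjacency
`u, u + 1` except the three across its cuts, and creates the adjacencies `a - 1, m`,
`c - 1, a` and `m - 1, c` (all modulo `n + 1`). Cutting at `x + 1`, `y`, `z + 1`, listed in the
increasing order that the cyclic orientation of `x, y, z` provides, creates `x, y` and `z, x + 1`:
new bonds at `p` and `q`. An adjacency that is destroyed starts at `x` or `z` or ends at `y`, and
none of these is a bond of `π`, since `π` has no bond at `p` or `q`. -/

open Equiv Finset Fin.NatCast

def blockShift (a m c t : ℕ) : ℕ :=
  if t < a ∨ c ≤ t then t else if t < m then t + (c - m) else t - (m - a)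

theorem blockShift_lt {n a m c t : ℕ} (hc : c ≤ n + 1) (ht : t < n + 1) :
    blockShift a m c t < n + 1 := by
  unfold blockShift; split_ifs <;> omega

theorem blockShift_blockShift {a m c t : ℕ} (ham : a ≤ m) (hmc : m ≤ c) :
    blockShift a (a + c - m) c (blockShift a m c t) = t := by
  unfold blockShift; split_ifs <;> omega

/-- Swaps the blocks `[a, m)` and `[m, c)`; this is `σ̄(a - 1, a + c - m - 1, c - 1)`. -/
def blockTransposition (n a m c : ℕ) (ham : a < m) (hmc : m < c) (hc : c ≤ n + 1) :
    Perm (Fin (n + 1)) where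
  toFun t := ⟨blockShift a m c t, blockShift_lt hc t.isLt⟩
  invFun t := ⟨blockShift a (a + c - m) c t, blockShift_lt hc t.isLt⟩
  left_inv t := Fin.ext (blockShift_blockShift ham.le hmc.le)
  right_inv t := Fin.ext <| by
    have h := blockShift_blockShift (a := a) (c := c) (t := t.val) (m := a + c - m)
      (by omega) (by omega)
    rwa [show a + c - (a + c - m) = m by omega] at h

theorem Fin.val_natCast_of_le {n c : ℕ} (hc : c ≤ n + 1) :
    ((c : Fin (n + 1)) : ℕ) = if c = n + 1 then 0 else c := by
  split_ifs with h
  · simp only [h, Fin.natCast_self, Fin.val_zero]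
  · exact Fin.val_cast_of_lt (by omega)

theorem Fin.eq_add_one_iff_val {n : ℕ} {u v : Fin (n + 1)} :
    v = u + 1 ↔ (v : ℕ) = ((u : ℕ) + 1) % (n + 1) := by
  simp [Fin.ext_iff, Fin.val_add]

section blockTransposition

variable {n a m c : ℕ} (ham : a < m) (hmc : m < c) (hc : c ≤ n + 1)

@[simp]
theorem blockTransposition_apply_val (t : Fin (n + 1)) :
    (blockTransposition n a m c ham hmc hc t : ℕ) = blockShift a m c t := rfl

theorem isBlockTransposition0_blockTransposition :
    IsBlockTransposition0 n (blockTransposition n a m c ham hmc hc) := by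
  refine ⟨a - 1, a + c - m - 1, c - 1, by omega, by omega, by omega, by omega, fun t => ?_⟩
  rw [blockTransposition_apply_val, blockShift]
  split_ifs <;> push_cast <;> omega

theorem blockTransposition_add_one (u : Fin (n + 1)) (hua : u + 1 ≠ (a : Fin (n + 1)))
    (hum : u + 1 ≠ (m : Fin (n + 1))) (huc : u + 1 ≠ (c : Fin (n + 1))) :
    blockTransposition n a m c ham hmc hc (u + 1) =
      blockTransposition n a m c ham hmc hc u + 1 := by
  have := Fin.val_natCast_of_le (show a ≤ n + 1 by omega)
  have := Fin.val_natCast_of_le (show m ≤ n + 1 by omega)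
  have := Fin.val_natCast_of_le hc
  simp only [ne_eq, Fin.ext_iff, Fin.val_add_one, blockTransposition_apply_val, Fin.val_last] at *
  unfold blockShift at *
  split_ifs at * <;> omega

theorem blockTransposition_mid (hac : (a : Fin (n + 1)) ≠ c) :
    blockTransposition n a m c ham hmc hc m =
      blockTransposition n a m c ham hmc hc (a - 1) + 1 := by
  have := Fin.val_natCast_of_le (show a ≤ n + 1 by omega)
  have := Fin.val_natCast_of_le (show m ≤ n + 1 by omega)
  have := Fin.val_natCast_of_le hc
  simp only [ne_eq, Fin.ext_iff, Fin.val_add_one, Fin.coe_sub_one, blockTransposition_apply_val,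
    Fin.val_last, Fin.val_zero] at *
  unfold blockShift at *
  split_ifs at * <;> omega

theorem blockTransposition_left :
    blockTransposition n a m c ham hmc hc a =
      blockTransposition n a m c ham hmc hc (c - 1) + 1 := by
  have := Fin.val_natCast_of_le (show a ≤ n + 1 by omega)
  have := Fin.val_natCast_of_le hc
  simp only [Fin.ext_iff, Fin.val_add_one, Fin.coe_sub_one, blockTransposition_apply_val,
    Fin.val_last, Fin.val_zero] at *
  unfold blockShift at *
  split_ifs at * <;> omega

theorem blockTransposition_right (hac : (a : Fin (n + 1)) ≠ c) :
    blockTransposition n a m c ham hmc hc c =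
      blockTransposition n a m c ham hmc hc (m - 1) + 1 := by
  have := Fin.val_natCast_of_le (show a ≤ n + 1 by omega)
  have := Fin.val_natCast_of_le (show m ≤ n + 1 by omega)
  have := Fin.val_natCast_of_le hc
  simp only [ne_eq, Fin.ext_iff, Fin.val_add_one, Fin.coe_sub_one, blockTransposition_apply_val,
    Fin.val_last, Fin.val_zero] at *
  unfold blockShift at *
  split_ifs at * <;> omega

end blockTransposition

theorem bondCount0_eq_card (n : ℕ) (π : Perm (Fin (n + 1))) :
    bondCount0 n π = #{t : Fin n | π t.succ = π t.castSucc + 1} := by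
  simp only [bondCount0, Fin.eq_add_one_iff_val]

theorem bondCount0_add_two_le {n : ℕ} {ρ ρ' : Perm (Fin (n + 1))} {p q : Fin n} (hpq : p ≠ q)
    (hbonds : ∀ t : Fin n, ρ t.succ = ρ t.castSucc + 1 → ρ' t.succ = ρ' t.castSucc + 1)
    (hp : ρ p.succ ≠ ρ p.castSucc + 1) (hq : ρ q.succ ≠ ρ q.castSucc + 1)
    (hp' : ρ' p.succ = ρ' p.castSucc + 1) (hq' : ρ' q.succ = ρ' q.castSucc + 1) :
    bondCount0 n ρ + 2 ≤ bondCount0 n ρ' := by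
  rw [bondCount0_eq_card, bondCount0_eq_card]
  set S := ({t : Fin n | ρ t.succ = ρ t.castSucc + 1} : Finset (Fin n))
  have hpS : p ∉ S := by simpa [S] using hp
  have hqS : q ∉ S := by simpa [S] using hq
  calc #S + 2 = #(insert p (insert q S)) := by
        rw [card_insert_of_notMem (by simp [hpq, hpS]), card_insert_of_notMem hqS]
    _ ≤ _ := card_le_card <| by
        intro t ht
        simp only [mem_insert, S, mem_filter, mem_univ, true_and] at ht ⊢
        rcases ht with rfl | rfl | ht
        exacts [hp', hq', hbonds t ht]

theorem bondCount0_add_two_le_mul {n : ℕ} {π σ : Perm (Fin (n + 1))} {p q : Fin n} (hpq : p ≠ q)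
    (hp : π p.succ ≠ π p.castSucc + 1) (hq : π q.succ ≠ π q.castSucc + 1)
    (hσ : ∀ u, u ≠ π p.castSucc → u ≠ π q.castSucc → u + 1 ≠ π p.succ → σ (u + 1) = σ u + 1)
    (hσp : σ (π p.succ) = σ (π p.castSucc) + 1) (hσq : σ (π q.succ) = σ (π q.castSucc) + 1) :
    bondCount0 n π + 2 ≤ bondCount0 n (σ * π) := by
  refine bondCount0_add_two_le hpq (fun t ht => ?_) hp hq hσp hσq
  have htp : t ≠ p := by rintro rfl; exact hp ht
  have htq : t ≠ q := by rintro rfl; exact hq ht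
  simp only [Perm.mul_apply, ht]
  refine hσ _ ?_ ?_ ?_
  · exact fun h => htp (Fin.castSucc_injective _ (π.injective h))
  · exact fun h => htq (Fin.castSucc_injective _ (π.injective h))
  · exact fun h => htp (Fin.succ_injective _ (π.injective (ht.trans h)))

theorem exists_blockTransposition_of_sbtw {n : ℕ} {x y z : Fin (n + 1)} (hxyz : sbtw x y z)
    (hy : y ≠ x + 1) :
    ∃ σ : Perm (Fin (n + 1)), IsBlockTransposition0 n σ ∧
      σ y = σ x + 1 ∧ σ (x + 1) = σ z + 1 ∧
      ∀ u, u ≠ x → u ≠ z → u + 1 ≠ y → σ (u + 1) = σ u + 1 := by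
  have hcast (v : Fin (n + 1)) : (((v : ℕ) + 1 : ℕ) : Fin (n + 1)) = v + 1 := by simp
  have hy' : (y : ℕ) ≠ ((x : ℕ) + 1) % (n + 1) := fun h => hy (Fin.eq_add_one_iff_val.2 h)
  rcases Fin.sbtw_iff.1 hxyz with ⟨hxy, hyz⟩ | ⟨hyz, hzx⟩ | ⟨hzx, hxy⟩
  · have hx1y : (x : ℕ) + 1 < y := by rw [Nat.mod_eq_of_lt (by omega)] at hy'; omega
    have hyz1 : (y : ℕ) < z + 1 := Nat.lt_succ_of_lt hyz
    have hxz : (((x : ℕ) + 1 : ℕ) : Fin (n + 1)) ≠ (((z : ℕ) + 1 : ℕ) : Fin (n + 1)) := by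
      simpa [hcast] using (hxy.trans hyz).ne
    refine ⟨_, isBlockTransposition0_blockTransposition hx1y hyz1 z.isLt, ?_, ?_,
      fun u hux huz huy => ?_⟩
    · simpa [hcast] using blockTransposition_mid hx1y hyz1 z.isLt hxz
    · simpa [hcast] using blockTransposition_left hx1y hyz1 z.isLt
    · apply blockTransposition_add_one <;> simpa [hcast]
  · have hyz1 : (y : ℕ) < z + 1 := Nat.lt_succ_of_lt hyz
    have hz1x1 : (z : ℕ) + 1 < x + 1 := Nat.succ_lt_succ hzx
    have hyx : ((y : ℕ) : Fin (n + 1)) ≠ (((x : ℕ) + 1 : ℕ) : Fin (n + 1)) := by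
      simpa [hcast] using hy
    refine ⟨_, isBlockTransposition0_blockTransposition hyz1 hz1x1 x.isLt, ?_, ?_,
      fun u hux huz huy => ?_⟩
    · simpa [hcast] using blockTransposition_left hyz1 hz1x1 x.isLt
    · simpa [hcast] using blockTransposition_right hyz1 hz1x1 x.isLt hyx
    · apply blockTransposition_add_one <;> simpa [hcast]
  · have hz1x1 : (z : ℕ) + 1 < x + 1 := Nat.succ_lt_succ hzx
    have hx1y : (x : ℕ) + 1 < y := by rw [Nat.mod_eq_of_lt (by omega)] at hy'; omega
    have hzy : (((z : ℕ) + 1 : ℕ) : Fin (n + 1)) ≠ ((y : ℕ) : Fin (n + 1)) := by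
      rw [hcast, Fin.cast_val_eq_self, ne_eq, Fin.ext_iff,
        Fin.val_add_one_of_lt (hzx.trans_le (Fin.le_last _))]
      omega
    refine ⟨_, isBlockTransposition0_blockTransposition hz1x1 hx1y y.isLt.le, ?_, ?_,
      fun u hux huz huy => ?_⟩
    · simpa [hcast] using blockTransposition_right hz1x1 hx1y y.isLt.le hzy
    · simpa [hcast] using blockTransposition_mid hz1x1 hx1y y.isLt.le hzy
    · apply blockTransposition_add_one <;> simpa [hcast]

/-- 2-move to the left, case (i): if `π̄` has the pattern
`[⋯ x y ⋯ z x̄ ⋯]` with `x, y, z` positively oriented, then some block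
transposition `σ̄` of `{0,…,n}` gives `σ̄∘π̄` at least two more bonds than `π̄`. -/
theorem two_move_left_i (n p q : ℕ) (hpq : p + 1 < q) (hq : q < n)
    (π : Equiv.Perm (Fin (n + 1)))
    (h1 : (π ⟨q + 1, by omega⟩).val = ((π ⟨p, by omega⟩).val + 1) % (n + 1))
    (h2 : ((π ⟨p, by omega⟩).val < (π ⟨p + 1, by omega⟩).val ∧
            (π ⟨p + 1, by omega⟩).val < (π ⟨q, by omega⟩).val) ∨
          ((π ⟨p + 1, by omega⟩).val < (π ⟨q, by omega⟩).val ∧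
            (π ⟨q, by omega⟩).val < (π ⟨p, by omega⟩).val) ∨
          ((π ⟨q, by omega⟩).val < (π ⟨p, by omega⟩).val ∧
            (π ⟨p, by omega⟩).val < (π ⟨p + 1, by omega⟩).val)) :
    ∃ σ : Equiv.Perm (Fin (n + 1)),
      IsBlockTransposition0 n σ ∧ bondCount0 n π + 2 ≤ bondCount0 n (σ * π) := by
  set p' : Fin n := ⟨p, by omega⟩
  set q' : Fin n := ⟨q, by omega⟩
  have hxyz : sbtw (π p'.castSucc) (π p'.succ) (π q'.castSucc) := Fin.sbtw_iff.2 h2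
  have hpattern : π q'.succ = π p'.castSucc + 1 := Fin.eq_add_one_iff_val.2 h1
  have hp'q' : p' ≠ q' := Fin.ne_of_val_ne (show p ≠ q by omega)
  have hp_not_bond : π p'.succ ≠ π p'.castSucc + 1 := by
    rw [← hpattern]
    exact π.injective.ne ((Fin.succ_injective _).ne hp'q')
  have hq_not_bond : π q'.succ ≠ π q'.castSucc + 1 := by
    rw [hpattern, ne_eq, add_left_inj]
    exact π.injective.ne ((Fin.castSucc_injective _).ne hp'q')
  obtain ⟨σ, hσ, hσp, hσq, hσ_add_one⟩ := exists_blockTransposition_of_sbtw hxyz hp_not_bond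
  exact ⟨σ, hσ, bondCount0_add_two_le_mul hp'q' hp_not_bond hq_not_bond
    hσ_add_one hσp (hpattern ▸ hσq)⟩
end

section
/- (Criterion for a 2-move to the left, case (ii)) Let π̄ be a permutation of {0,1,…,n} such that there exists a position p with p+2 ≤ n satisfying π̄_{p+2} ≡ π̄_p + 1 (mod n+1) (i.e., π̄ has the pattern [⋯ x y x̄ ⋯]). Then there exists a block transposition σ̄ of {0,1,…,n} such that σ̄∘π̄ has at least two more bonds than π̄. -/
def bf1 (x y v : ℕ) : ℕ :=
  if v < y then v else if v = y then x else if v ≤ x then v - 1 else v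

def bg1 (x y w : ℕ) : ℕ :=
  if w < y then w else if w < x then w + 1 else if w = x then y else w

def bf2 (x y v : ℕ) : ℕ :=
  if v ≤ x then v else if v < y then v + 1 else if v = y then x + 1 else v

def bg2 (x y w : ℕ) : ℕ :=
  if w ≤ x then w else if w = x + 1 then y else if w ≤ y then w - 1 else w

def perm1 (n x y : ℕ) (hx : x ≤ n) (hxy : y < x) : Equiv.Perm (Fin (n + 1)) where
  toFun v := ⟨bf1 x y v.val, by have := v.isLt; unfold bf1; split_ifs <;> omega⟩
  invFun w := ⟨bg1 x y w.val, by have := w.isLt; unfold bg1; split_ifs <;> omega⟩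
  left_inv v := by
    apply Fin.ext
    have := v.isLt
    show bg1 x y (bf1 x y v.val) = v.val
    unfold bf1 bg1; split_ifs <;> omega
  right_inv w := by
    apply Fin.ext
    have := w.isLt
    show bf1 x y (bg1 x y w.val) = w.val
    unfold bf1 bg1; split_ifs <;> omega

def perm2 (n x y : ℕ) (hy : y ≤ n) (hxy : x < y) : Equiv.Perm (Fin (n + 1)) where
  toFun v := ⟨bf2 x y v.val, by have := v.isLt; unfold bf2; split_ifs <;> omega⟩
  invFun w := ⟨bg2 x y w.val, by have := w.isLt; unfold bg2; split_ifs <;> omega⟩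
  left_inv v := by
    apply Fin.ext
    have := v.isLt
    show bg2 x y (bf2 x y v.val) = v.val
    unfold bf2 bg2; split_ifs <;> omega
  right_inv w := by
    apply Fin.ext
    have := w.isLt
    show bf2 x y (bg2 x y w.val) = w.val
    unfold bf2 bg2; split_ifs <;> omega

lemma mod_succ_eq (n a : ℕ) (ha : a ≤ n) :
    (a + 1) % (n + 1) = if a = n then 0 else a + 1 := by
  split_ifs with h
  · simp [h]
  · exact Nat.mod_eq_of_lt (by omega)

lemma bf1_step (n x y a b : ℕ) (hx : x ≤ n) (hxy : y < x) (ha : a ≤ n)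
    (hb : b = (a + 1) % (n + 1)) (h1 : a ≠ x) (h2 : a ≠ y) (h3 : b ≠ y) :
    bf1 x y b = (bf1 x y a + 1) % (n + 1) := by
  have hfa : bf1 x y a ≤ n := by unfold bf1; split_ifs <;> omega
  have hb' : (a < n ∧ b = a + 1) ∨ (a = n ∧ b = 0) := by
    rcases Nat.lt_or_ge a n with h | h
    · exact Or.inl ⟨h, by rw [hb]; exact Nat.mod_eq_of_lt (by omega)⟩
    · have he : a = n := by omega
      exact Or.inr ⟨he, by rw [hb, he]; simp⟩
  rw [mod_succ_eq n _ hfa]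
  unfold bf1
  split_ifs <;> omega

lemma bf2_step (n x y a b : ℕ) (hy : y ≤ n) (hxy : x + 1 < y) (ha : a ≤ n)
    (hb : b = (a + 1) % (n + 1)) (h1 : a ≠ x) (h2 : a ≠ y) (h3 : b ≠ y) :
    bf2 x y b = (bf2 x y a + 1) % (n + 1) := by
  have hfa : bf2 x y a ≤ n := by unfold bf2; split_ifs <;> omega
  have hb' : (a < n ∧ b = a + 1) ∨ (a = n ∧ b = 0) := by
    rcases Nat.lt_or_ge a n with h | h
    · exact Or.inl ⟨h, by rw [hb]; exact Nat.mod_eq_of_lt (by omega)⟩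
    · have he : a = n := by omega
      exact Or.inr ⟨he, by rw [hb, he]; simp⟩
  rw [mod_succ_eq n _ hfa]
  unfold bf2
  split_ifs <;> omega

lemma bond_count_aux (n : ℕ) (π ρ : Equiv.Perm (Fin (n + 1))) (p q : Fin n) (hpq : p ≠ q)
    (hb : ∀ t : Fin n, (π t.succ).val = ((π t.castSucc).val + 1) % (n + 1) →
        (ρ t.succ).val = ((ρ t.castSucc).val + 1) % (n + 1))
    (hp1 : ¬ (π p.succ).val = ((π p.castSucc).val + 1) % (n + 1))
    (hq1 : ¬ (π q.succ).val = ((π q.castSucc).val + 1) % (n + 1))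
    (hp2 : (ρ p.succ).val = ((ρ p.castSucc).val + 1) % (n + 1))
    (hq2 : (ρ q.succ).val = ((ρ q.castSucc).val + 1) % (n + 1)) :
    bondCount0 n π + 2 ≤ bondCount0 n ρ := by
  classical
  unfold bondCount0
  set S := Finset.univ.filter fun t : Fin n =>
    (π t.succ).val = ((π t.castSucc).val + 1) % (n + 1) with hS
  set S' := Finset.univ.filter fun t : Fin n =>
    (ρ t.succ).val = ((ρ t.castSucc).val + 1) % (n + 1) with hS'
  have hps : p ∉ S := by simp [hS, hp1]
  have hqs : q ∉ S := by simp [hS, hq1]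
  have hsub : insert p (insert q S) ⊆ S' := by
    intro t ht
    simp only [Finset.mem_insert] at ht
    simp only [hS', Finset.mem_filter, Finset.mem_univ, true_and]
    rcases ht with rfl | rfl | h
    · exact hp2
    · exact hq2
    · exact hb t (by simpa [hS, Finset.mem_filter] using h)
  have hcard : (insert p (insert q S)).card = S.card + 2 := by
    rw [Finset.card_insert_of_notMem (by simp [Finset.mem_insert, hps, hpq]),
      Finset.card_insert_of_notMem hqs]
  calc S.card + 2 = (insert p (insert q S)).card := hcard.symm
    _ ≤ S'.card := Finset.card_le_card hsub

/-- 2-move to the left, case (ii): if `π̄` has the pattern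
`[⋯ x y x̄ ⋯]`, then some block transposition `σ̄` of `{0,…,n}` gives `σ̄∘π̄`
at least two more bonds than `π̄`. -/
theorem two_move_left_ii (n p : ℕ) (hp : p + 2 ≤ n)
    (π : Equiv.Perm (Fin (n + 1)))
    (h1 : (π ⟨p + 2, by omega⟩).val = ((π ⟨p, by omega⟩).val + 1) % (n + 1)) :
    ∃ σ : Equiv.Perm (Fin (n + 1)),
      IsBlockTransposition0 n σ ∧ bondCount0 n π + 2 ≤ bondCount0 n (σ * π) := by
  have hp0 : p < n + 1 := by omega
  have hp1 : p + 1 < n + 1 := by omega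
  have hp2 : p + 2 < n + 1 := by omega
  have hpn : p < n := by omega
  have hpn1 : p + 1 < n := by omega
  have h1' : (π ⟨p + 2, hp2⟩).val = ((π ⟨p, hp0⟩).val + 1) % (n + 1) := h1
  set x := (π ⟨p, hp0⟩).val with hxd
  set y := (π ⟨p + 1, hp1⟩).val with hyd
  set z := (π ⟨p + 2, hp2⟩).val with hzd
  have hxn : x ≤ n := Fin.is_le _
  have hyn : y ≤ n := Fin.is_le _
  have hinj : ∀ u v : Fin (n + 1), (π u).val = (π v).val → u = v := fun u v h =>
    π.injective (Fin.val_injective h)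
  have hyx0 : y ≠ x := by
    intro h
    have h3 : p + 1 = p := congrArg Fin.val (hinj ⟨p + 1, hp1⟩ ⟨p, hp0⟩ (hyd.symm.trans (h.trans hxd)))
    omega
  have hyz : y ≠ z := by
    intro h
    have h3 : p + 1 = p + 2 := congrArg Fin.val (hinj ⟨p + 1, hp1⟩ ⟨p + 2, hp2⟩ (hyd.symm.trans (h.trans hzd)))
    omega
  -- index bookkeeping helpers
  have hPQ : (⟨p, hpn⟩ : Fin n) ≠ ⟨p + 1, hpn1⟩ := by
    intro h
    have h3 : p = p + 1 := congrArg Fin.val h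
    omega
  have hsuccP : (⟨p, hpn⟩ : Fin n).succ = (⟨p + 1, hp1⟩ : Fin (n + 1)) := rfl
  have hcsP : (⟨p, hpn⟩ : Fin n).castSucc = (⟨p, hp0⟩ : Fin (n + 1)) := rfl
  have hsuccQ : (⟨p + 1, hpn1⟩ : Fin n).succ = (⟨p + 2, hp2⟩ : Fin (n + 1)) := rfl
  have hcsQ : (⟨p + 1, hpn1⟩ : Fin n).castSucc = (⟨p + 1, hp1⟩ : Fin (n + 1)) := rfl
  rcases Nat.lt_or_ge y x with hlt | hge
  · -- case y < x : slide y up next to x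
    set σ := perm1 n x y hxn hlt with hσd
    have happ : ∀ v : Fin (n + 1), (σ v).val = bf1 x y v.val := fun v => rfl
    have hzc : (x < n ∧ z = x + 1) ∨ (x = n ∧ z = 0) := by
      rcases Nat.lt_or_ge x n with h | h
      · exact Or.inl ⟨h, by rw [h1']; exact Nat.mod_eq_of_lt (by omega)⟩
      · have he : x = n := by omega
        exact Or.inr ⟨he, by rw [h1', he]; simp⟩
    have hzy : z ≠ (y + 1) % (n + 1) := by
      rw [mod_succ_eq n y hyn]
      split_ifs <;> omega
    refine ⟨σ, ⟨(y : ℤ) - 1, (x : ℤ) - 1, (x : ℤ), by omega, by omega, by omega,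
      by exact_mod_cast hxn, ?_⟩, ?_⟩
    · intro t
      rw [happ t]
      have := t.isLt
      unfold bf1
      split_ifs <;> omega
    · apply bond_count_aux n π (σ * π) ⟨p, hpn⟩ ⟨p + 1, hpn1⟩ hPQ
      · -- transfer of old bonds
        intro t ht
        show (σ (π t.succ)).val = ((σ (π t.castSucc)).val + 1) % (n + 1)
        rw [happ, happ]
        apply bf1_step n x y _ _ hxn hlt (Fin.is_le _) ht
        · intro h
          have hcs : t.castSucc = (⟨p, hp0⟩ : Fin (n + 1)) := hinj _ _ (h.trans hxd)
          have hsc : t.succ = (⟨p + 1, hp1⟩ : Fin (n + 1)) := by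
            apply Fin.ext
            have := congrArg Fin.val hcs
            simp only [Fin.coe_castSucc] at this
            simp [Fin.val_succ, this]
          rw [hsc, h, ← hyd] at ht
          exact hyz (ht.trans ((hzd.trans h1').symm))
        · intro h
          have hcs : t.castSucc = (⟨p + 1, hp1⟩ : Fin (n + 1)) := hinj _ _ (h.trans hyd)
          have hsc : t.succ = (⟨p + 2, hp2⟩ : Fin (n + 1)) := by
            apply Fin.ext
            have := congrArg Fin.val hcs
            simp only [Fin.coe_castSucc] at this
            simp [Fin.val_succ, this]
          rw [hsc, h, ← hzd] at ht
          exact hzy ht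
        · intro h
          have hsc : t.succ = (⟨p + 1, hp1⟩ : Fin (n + 1)) := hinj _ _ (h.trans hyd)
          have hcs : t.castSucc = (⟨p, hp0⟩ : Fin (n + 1)) := by
            apply Fin.ext
            have := congrArg Fin.val hsc
            simp only [Fin.val_succ] at this
            simp only [Fin.coe_castSucc]
            omega
          rw [hsc, hcs, ← hxd, ← hyd] at ht
          exact hyz (ht.trans ((hzd.trans h1').symm))
      · -- p is not a bond of π
        rw [hsuccP, hcsP, ← hxd, ← hyd]
        intro h
        exact hyz (h.trans ((hzd.trans h1').symm))
      · -- p+1 is not a bond of π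
        rw [hsuccQ, hcsQ, ← hyd, ← hzd]
        exact hzy
      · -- p is a bond of σπ
        show (σ (π (⟨p, hpn⟩ : Fin n).succ)).val = ((σ (π (⟨p, hpn⟩ : Fin n).castSucc)).val + 1) % (n + 1)
        rw [hsuccP, hcsP, happ, happ, ← hxd, ← hyd]
        have e1 : bf1 x y y = x := by unfold bf1; split_ifs <;> omega
        have e2 : bf1 x y x = x - 1 := by unfold bf1; split_ifs <;> omega
        rw [e1, e2]
        have hx1 : x - 1 + 1 = x := by omega
        rw [hx1]
        exact (Nat.mod_eq_of_lt (by omega)).symm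
      · -- p+1 is a bond of σπ
        show (σ (π (⟨p + 1, hpn1⟩ : Fin n).succ)).val = ((σ (π (⟨p + 1, hpn1⟩ : Fin n).castSucc)).val + 1) % (n + 1)
        rw [hsuccQ, hcsQ, happ, happ, ← hyd, ← hzd]
        have e1 : bf1 x y y = x := by unfold bf1; split_ifs <;> omega
        rw [e1, mod_succ_eq n x hxn]
        unfold bf1
        split_ifs <;> omega
  · -- case x < y : slide y down next to x
    have hlt : x < y := by omega
    have hz2 : z = x + 1 := by rw [h1']; exact Nat.mod_eq_of_lt (by omega)
    have hx1y : x + 1 < y := by omega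
    set σ := perm2 n x y hyn hlt with hσd
    have happ : ∀ v : Fin (n + 1), (σ v).val = bf2 x y v.val := fun v => rfl
    have hzy : z ≠ (y + 1) % (n + 1) := by
      rw [mod_succ_eq n y hyn]
      split_ifs <;> omega
    refine ⟨σ, ⟨(x : ℤ), (x : ℤ) + 1, (y : ℤ), by omega, by omega, by omega,
      by exact_mod_cast hyn, ?_⟩, ?_⟩
    · intro t
      rw [happ t]
      have := t.isLt
      unfold bf2
      split_ifs <;> omega
    · apply bond_count_aux n π (σ * π) ⟨p, hpn⟩ ⟨p + 1, hpn1⟩ hPQ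
      · intro t ht
        show (σ (π t.succ)).val = ((σ (π t.castSucc)).val + 1) % (n + 1)
        rw [happ, happ]
        apply bf2_step n x y _ _ hyn hx1y (Fin.is_le _) ht
        · intro h
          have hcs : t.castSucc = (⟨p, hp0⟩ : Fin (n + 1)) := hinj _ _ (h.trans hxd)
          have hsc : t.succ = (⟨p + 1, hp1⟩ : Fin (n + 1)) := by
            apply Fin.ext
            have := congrArg Fin.val hcs
            simp only [Fin.coe_castSucc] at this
            simp [Fin.val_succ, this]
          rw [hsc, h, ← hyd] at ht
          exact hyz (ht.trans ((hzd.trans h1').symm))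
        · intro h
          have hcs : t.castSucc = (⟨p + 1, hp1⟩ : Fin (n + 1)) := hinj _ _ (h.trans hyd)
          have hsc : t.succ = (⟨p + 2, hp2⟩ : Fin (n + 1)) := by
            apply Fin.ext
            have := congrArg Fin.val hcs
            simp only [Fin.coe_castSucc] at this
            simp [Fin.val_succ, this]
          rw [hsc, h, ← hzd] at ht
          exact hzy ht
        · intro h
          have hsc : t.succ = (⟨p + 1, hp1⟩ : Fin (n + 1)) := hinj _ _ (h.trans hyd)
          have hcs : t.castSucc = (⟨p, hp0⟩ : Fin (n + 1)) := by
            apply Fin.ext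
            have := congrArg Fin.val hsc
            simp only [Fin.val_succ] at this
            simp only [Fin.coe_castSucc]
            omega
          rw [hsc, hcs, ← hxd, ← hyd] at ht
          exact hyz (ht.trans ((hzd.trans h1').symm))
      · rw [hsuccP, hcsP, ← hxd, ← hyd]
        intro h
        exact hyz (h.trans ((hzd.trans h1').symm))
      · rw [hsuccQ, hcsQ, ← hyd, ← hzd]
        exact hzy
      · show (σ (π (⟨p, hpn⟩ : Fin n).succ)).val = ((σ (π (⟨p, hpn⟩ : Fin n).castSucc)).val + 1) % (n + 1)
        rw [hsuccP, hcsP, happ, happ, ← hxd, ← hyd]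
        have e1 : bf2 x y y = x + 1 := by unfold bf2; split_ifs <;> omega
        have e2 : bf2 x y x = x := by unfold bf2; split_ifs <;> omega
        rw [e1, e2]
        exact (Nat.mod_eq_of_lt (by omega)).symm
      · show (σ (π (⟨p + 1, hpn1⟩ : Fin n).succ)).val = ((σ (π (⟨p + 1, hpn1⟩ : Fin n).castSucc)).val + 1) % (n + 1)
        rw [hsuccQ, hcsQ, happ, happ, ← hyd, ← hzd]
        have e1 : bf2 x y y = x + 1 := by unfold bf2; split_ifs <;> omega
        have e2 : bf2 x y z = x + 2 := by unfold bf2; split_ifs <;> omega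
        rw [e1, e2]
        exact (Nat.mod_eq_of_lt (by omega)).symm
end
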